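/- arXiv:2202.02919 — 6 statements merged into one kernel-verified Lean document; each statement's English description precedes it below -/
import Mathlib

section
/- On the sphere of radius 1/√2 in ℝ³, if p and q are two points on the sphere that are not antipodal (q ≠ -p) and not equal, then there are at most 2 points on the sphere at Euclidean distance 1 from both p and q. -/
/-!
Distance 1 between two points of norm `1/√2` means `‖x - p‖² = ‖x‖² + ‖p‖²`, i.e. `x ⟂ p`.
So a common unit-distance neighbour of `p` and `q` lies in `(span {p, q})ᗮ`. Two points of the
same norm that are neither equal nor antipodal are linearly independent, so in `ℝ³` this
orthogonal complement is a line, which meets the sphere in just two antipodal points.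
-/

open Module

theorem real_inner_eq_zero_of_norm_eq_inv_sqrt_two_of_dist_eq_one {E : Type*}
    [NormedAddCommGroup E] [InnerProductSpace ℝ E] {x y : E}
    (hx : ‖x‖ = 1 / Real.sqrt 2) (hy : ‖y‖ = 1 / Real.sqrt 2) (hxy : dist x y = 1) :
    inner ℝ x y = 0 := by
  rw [← norm_sub_sq_eq_norm_sq_add_norm_sq_iff_real_inner_eq_zero, ← dist_eq_norm, hxy, hx, hy,
    one_div, ← mul_inv, Real.mul_self_sqrt zero_le_two]
  norm_num

theorem linearIndependent_pair_of_norm_eq {E : Type*} [NormedAddCommGroup E] [NormedSpace ℝ E]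
    {p q : E} (hp : p ≠ 0) (hpq : ‖q‖ = ‖p‖) (hne : q ≠ p) (hanti : q ≠ -p) :
    LinearIndependent ℝ ![p, q] := by
  rw [LinearIndependent.pair_iff' hp]
  rintro a rfl
  have ha : |a| = 1 := by
    rwa [norm_smul, Real.norm_eq_abs, mul_eq_right₀ (norm_ne_zero_iff.2 hp)] at hpq
  rcases eq_or_eq_neg_of_abs_eq ha with rfl | rfl
  · exact hne (one_smul ℝ p)
  · exact hanti (neg_one_smul ℝ p)

section Orthogonal

variable {𝕜 E : Type*} [RCLike 𝕜] [NormedAddCommGroup E] [InnerProductSpace 𝕜 E]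

theorem Submodule.mem_orthogonal_span_pair_iff {p q v : E} :
    v ∈ (span 𝕜 {p, q})ᗮ ↔ inner 𝕜 p v = 0 ∧ inner 𝕜 q v = 0 := by
  rw [span_insert, ← inf_orthogonal, mem_inf, mem_orthogonal_singleton_iff_inner_right,
    mem_orthogonal_singleton_iff_inner_right]

theorem Submodule.finrank_orthogonal_span_pair [FiniteDimensional 𝕜 E] {n : ℕ}
    (hE : finrank 𝕜 E = n + 2) {p q : E} (hpq : LinearIndependent 𝕜 ![p, q]) :
    finrank 𝕜 (span 𝕜 {p, q})ᗮ = n := by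
  have hspan : finrank 𝕜 (span 𝕜 {p, q}) = 2 := by
    rw [← Matrix.range_cons_cons_empty p q ![], finrank_span_eq_card hpq, Fintype.card_fin]
  have := finrank_add_finrank_orthogonal (span 𝕜 {p, q})
  omega

end Orthogonal

theorem Submodule.exists_eq_or_eq_neg_of_finrank_eq_one {E : Type*} [NormedAddCommGroup E]
    [NormedSpace ℝ E] {K : Submodule ℝ E} (hK : finrank ℝ K = 1) (r : ℝ) :
    ∃ a : E, ∀ y ∈ K, ‖y‖ = r → y = a ∨ y = -a := by
  obtain ⟨v, hv0, hv⟩ := finrank_eq_one_iff'.1 hK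
  have hv0' : ‖(v : E)‖ ≠ 0 := by simpa using hv0
  refine ⟨(r / ‖(v : E)‖) • (v : E), fun y hy hyr => ?_⟩
  obtain ⟨c, hc⟩ := hv ⟨y, hy⟩
  obtain rfl : y = c • (v : E) := (congrArg Subtype.val hc).symm
  have hc : |c| = r / ‖(v : E)‖ := by
    rw [eq_div_iff hv0', ← hyr, norm_smul, Real.norm_eq_abs]
  rcases eq_or_eq_neg_of_abs_eq hc with rfl | rfl
  · exact Or.inl rfl
  · exact Or.inr (neg_smul _ _)

theorem at_most_two_common_neighbors_nonantipodal
    (p q : EuclideanSpace ℝ (Fin 3))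
    (hp : ‖p‖ = 1 / Real.sqrt 2) (hq : ‖q‖ = 1 / Real.sqrt 2)
    (hne : q ≠ p) (hanti : q ≠ -p) :
    ∃ a b : EuclideanSpace ℝ (Fin 3),
      {x : EuclideanSpace ℝ (Fin 3) |
        ‖x‖ = 1 / Real.sqrt 2 ∧ dist x p = 1 ∧ dist x q = 1} ⊆ {a, b} := by
  have hp0 : p ≠ 0 := norm_ne_zero_iff.1 (by rw [hp]; positivity)
  have hK : finrank ℝ (Submodule.span ℝ {p, q})ᗮ = 1 :=
    Submodule.finrank_orthogonal_span_pair (by simp)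
      (linearIndependent_pair_of_norm_eq hp0 (hq.trans hp.symm) hne hanti)
  obtain ⟨a, ha⟩ := Submodule.exists_eq_or_eq_neg_of_finrank_eq_one hK (1 / Real.sqrt 2)
  refine ⟨a, -a, fun x ⟨hx, hxp, hxq⟩ => ha x ?_ hx⟩
  rw [Submodule.mem_orthogonal_span_pair_iff, real_inner_comm, real_inner_comm x]
  exact ⟨real_inner_eq_zero_of_norm_eq_inv_sqrt_two_of_dist_eq_one hx hp hxp,
    real_inner_eq_zero_of_norm_eq_inv_sqrt_two_of_dist_eq_one hx hq hxq⟩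
end

section
/- In ℝ³, for any three points p₁, p₂, p₃ that do not all lie on a common line, there are at most 2 points at distance exactly 1 from each of p₁, p₂, p₃. More generally, for any three distinct points in ℝ³, if the set of points at unit distance from all three is infinite then p₁, p₂, p₃ are collinear. -/
/-!
Three non-collinear points span a plane `Π`, and a point at distance `r` from all three projects
orthogonally onto the circumcenter of the triangle they form. In three-space `Π` has codimension
one, so any two such points lie on the common normal line through that circumcenter, at the same
distance from it: they either coincide or are mirror images in `Π`.
-/

open EuclideanGeometry Module

theorem AffineSubspace.affineSpan_insert_eq_top_of_notMem {k V P : Type*} [DivisionRing k]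
    [AddCommGroup V] [Module k V] [AddTorsor V P] [FiniteDimensional k V]
    {s : AffineSubspace k P} (hs : (s : Set P).Nonempty)
    (hcodim : finrank k s.direction + 1 = finrank k V) {x : P} (hx : x ∉ s) :
    affineSpan k (insert x (s : Set P)) = ⊤ := by
  have hle : s ≤ affineSpan k (insert x (s : Set P)) :=
    fun _ hp ↦ mem_affineSpan k (Set.mem_insert_of_mem x hp)
  have hlt : s < affineSpan k (insert x (s : Set P)) :=
    lt_of_le_of_ne hle fun h ↦ hx (h ▸ mem_affineSpan k (Set.mem_insert x _))
  have hrank := Submodule.finrank_lt_finrank_of_lt (direction_lt_of_nonempty hlt hs)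
  rw [← direction_eq_top_iff_of_nonempty (hs.mono hle)]
  exact Submodule.eq_top_of_finrank_eq ((Submodule.finrank_le _).antisymm (by omega))

theorem Affine.Simplex.finrank_direction_affineSpan {k V P : Type*} [DivisionRing k]
    [AddCommGroup V] [Module k V] [AddTorsor V P] {n : ℕ} (s : Affine.Simplex k P n) :
    finrank k (affineSpan k (Set.range s.points)).direction = n := by
  rw [direction_affineSpan, s.independent.finrank_vectorSpan (Fintype.card_fin _)]

section CodimensionOne

variable {V P : Type*} [NormedAddCommGroup V] [InnerProductSpace ℝ V] [MetricSpace P]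
  [NormedAddTorsor V P] [FiniteDimensional ℝ V]

theorem EuclideanGeometry.eq_or_eq_reflection_of_dist_eq_of_finrank_eq {n : ℕ}
    {s : Affine.Simplex ℝ P n} (hV : finrank ℝ V = n + 1) {p₁ p₂ : P} {r : ℝ}
    (h₁ : ∀ i, dist (s.points i) p₁ = r) (h₂ : ∀ i, dist (s.points i) p₂ = r) :
    p₁ = p₂ ∨ p₁ = reflection (affineSpan ℝ (Set.range s.points)) p₂ := by
  by_cases hp₁ : p₁ ∈ affineSpan ℝ (Set.range s.points)
  · exact eq_or_eq_reflection_of_dist_eq (p := p₂)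
      (affineSpan_mono ℝ (Set.subset_insert _ _) hp₁) (mem_affineSpan ℝ (Set.mem_insert _ _))
      h₁ h₂
  · have htop : affineSpan ℝ (insert p₁ (Set.range s.points)) = ⊤ := by
      rw [← affineSpan_insert_affineSpan]
      exact AffineSubspace.affineSpan_insert_eq_top_of_notMem
        ((Set.range_nonempty _).mono (subset_affineSpan ℝ _))
        (by rw [s.finrank_direction_affineSpan, hV]) hp₁
    exact eq_or_eq_reflection_of_dist_eq (mem_affineSpan ℝ (Set.mem_insert _ _))
      (htop ▸ AffineSubspace.mem_top ℝ V p₂) h₁ h₂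

theorem exists_subset_pair_of_not_collinear (hV : finrank ℝ V = 3) {p₁ p₂ p₃ : P}
    (h : ¬ Collinear ℝ ({p₁, p₂, p₃} : Set P)) (r : ℝ) :
    ∃ a b : P, {x | dist x p₁ = r ∧ dist x p₂ = r ∧ dist x p₃ = r} ⊆ {a, b} := by
  let t : Affine.Triangle ℝ P := ⟨![p₁, p₂, p₃], affineIndependent_iff_not_collinear_set.2 h⟩
  have hdist : ∀ x, dist x p₁ = r ∧ dist x p₂ = r ∧ dist x p₃ = r →
      ∀ i, dist (t.points i) x = r := by
    rintro x ⟨h₁, h₂, h₃⟩ i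
    fin_cases i <;> simp only [t] <;> rw [dist_comm] <;> assumption
  by_cases hex : ∃ a, dist a p₁ = r ∧ dist a p₂ = r ∧ dist a p₃ = r
  · obtain ⟨a, ha⟩ := hex
    refine ⟨a, reflection (affineSpan ℝ (Set.range t.points)) a, fun x hx ↦ ?_⟩
    exact eq_or_eq_reflection_of_dist_eq_of_finrank_eq hV (hdist x hx) (hdist a ha)
  · exact ⟨p₁, p₁, fun x hx ↦ (hex ⟨x, hx⟩).elim⟩

end CodimensionOne

theorem common_unit_neighbors_in_space
    (p₁ p₂ p₃ : EuclideanSpace ℝ (Fin 3)) :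
    (¬ Collinear ℝ ({p₁, p₂, p₃} : Set (EuclideanSpace ℝ (Fin 3))) →
      ∃ a b : EuclideanSpace ℝ (Fin 3),
        {x : EuclideanSpace ℝ (Fin 3) |
          dist x p₁ = 1 ∧ dist x p₂ = 1 ∧ dist x p₃ = 1} ⊆ {a, b}) ∧
    (p₁ ≠ p₂ → p₁ ≠ p₃ → p₂ ≠ p₃ →
      {x : EuclideanSpace ℝ (Fin 3) |
        dist x p₁ = 1 ∧ dist x p₂ = 1 ∧ dist x p₃ = 1}.Infinite →
      Collinear ℝ ({p₁, p₂, p₃} : Set (EuclideanSpace ℝ (Fin 3)))) := by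
  have hV := finrank_euclideanSpace_fin (𝕜 := ℝ) (n := 3)
  refine ⟨fun h ↦ exists_subset_pair_of_not_collinear hV h 1, fun _ _ _ hinf ↦ ?_⟩
  by_contra h
  obtain ⟨a, b, hab⟩ := exists_subset_pair_of_not_collinear hV h 1
  exact hinf ((Set.toFinite {a, b}).subset hab)
end

section
/- Let P be a set of n points on the sphere of radius 1/√2 in ℝ³. The number of 3-tuples (p₁, p₂, p₃) of distinct points of P with ‖p₁ - p₂‖ = ‖p₂ - p₃‖ = 1 is at most C·n² for an absolute constant C (in fact C = 2 works for the count of such paths with p₁ ≠ p₃, plus n² for antipodal end pairs). -/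
/-!
Points of the sphere of radius `1/√2` are at distance `1` exactly when they are orthogonal.
So the middle point `b` of a path `(a, b, c)` lies on the line orthogonal to `a` and `c`, and,
unless `c = ±a`, this line meets the sphere in two points: the pair `(a, c)` has at most two
middles. The paths with `c = -a` are determined by `(a, b)`, which gives the bound `3 n²`.
-/

open Finset Module Submodule RealInnerProductSpace

section Metric

variable {X : Type*} [PseudoMetricSpace X]

open Classical in
noncomputable def unitPaths (P : Finset X) : Finset (X × X × X) :=
  {t ∈ P ×ˢ P ×ˢ P | t.1 ≠ t.2.1 ∧ t.1 ≠ t.2.2 ∧ t.2.1 ≠ t.2.2 ∧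
    dist t.1 t.2.1 = 1 ∧ dist t.2.1 t.2.2 = 1}

theorem coe_unitPaths (P : Finset X) :
    (unitPaths P : Set (X × X × X)) = {t | t.1 ∈ P ∧ t.2.1 ∈ P ∧ t.2.2 ∈ P ∧
      t.1 ≠ t.2.1 ∧ t.1 ≠ t.2.2 ∧ t.2.1 ≠ t.2.2 ∧ dist t.1 t.2.1 = 1 ∧ dist t.2.1 t.2.2 = 1} := by
  ext t
  simp [unitPaths, and_assoc]

end Metric

variable {E : Type*} [NormedAddCommGroup E]

theorem card_filter_unitPaths_antipodal_le [DecidableEq E] (P : Finset E) :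
    #{t ∈ unitPaths P | t.2.2 = -t.1} ≤ #P ^ 2 := by
  rw [sq, ← card_product]
  refine card_le_card_of_injOn (fun t => (t.1, t.2.1)) (fun t ht => ?_) fun t ht s hs hts => ?_
  · simp_all [unitPaths]
  · simp only [mem_coe, mem_filter, Prod.mk.injEq] at ht hs hts
    ext <;> simp [hts, ht.2, hs.2]

theorem exists_forall_mem_norm_eq_imp_eq_or_eq_neg [NormedSpace ℝ E] {K : Submodule ℝ E}
    (hK : finrank ℝ K = 1) (r : ℝ) : ∃ w : E, ∀ b ∈ K, ‖b‖ = r → b = w ∨ b = -w := by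
  obtain ⟨v, hv0, hv⟩ := finrank_eq_one_iff'.1 hK
  have hvpos : 0 < ‖(v : E)‖ := norm_pos_iff.2 (by simpa using hv0)
  refine ⟨(r / ‖(v : E)‖) • (v : E), fun b hb hbr => ?_⟩
  obtain ⟨t, ht⟩ := hv ⟨b, hb⟩
  replace ht : t • (v : E) = b := congrArg Subtype.val ht
  have habs : |t| = r / ‖(v : E)‖ := by
    rw [eq_div_iff hvpos.ne', ← Real.norm_eq_abs, ← norm_smul, ht, hbr]
  rcases abs_eq (habs ▸ abs_nonneg t) |>.1 habs with h | h
  · exact .inl (by rw [← ht, h])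
  · exact .inr (by rw [← ht, h, neg_smul])

theorem linearIndependent_pair_of_norm_eq_s6 [NormedSpace ℝ E] {a c : E} (hnorm : ‖a‖ = ‖c‖)
    (hc : c ≠ 0) (hac : a ≠ c) (hca : c ≠ -a) : LinearIndependent ℝ ![a, c] := by
  refine linearIndependent_fin2.2 ⟨hc, fun t ht => ?_⟩
  simp only [Matrix.cons_val_one, Matrix.cons_val_zero] at ht
  have ht1 : |t| = 1 := by
    have : |t| * ‖c‖ = 1 * ‖c‖ := by rw [← Real.norm_eq_abs, ← norm_smul, ht, hnorm, one_mul]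
    exact mul_right_cancel₀ (norm_ne_zero_iff.2 hc) this
  rcases abs_eq_abs.1 (ht1.trans abs_one.symm) with rfl | rfl
  · exact hac (by rw [← ht, one_smul])
  · exact hca (by rw [← ht, neg_one_smul, neg_neg])

variable [InnerProductSpace ℝ E]

theorem inner_eq_zero_of_dist_sq_eq {x y : E} {r : ℝ} (hx : ‖x‖ = r) (hy : ‖y‖ = r)
    (hxy : dist x y ^ 2 = 2 * r ^ 2) : ⟪x, y⟫ = 0 := by
  rw [dist_eq_norm, norm_sub_sq_real, hx, hy] at hxy
  linarith

theorem finrank_orthogonal_span_pair [FiniteDimensional ℝ E] {a c : E}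
    (hac : LinearIndependent ℝ ![a, c]) : finrank ℝ (span ℝ {a, c})ᗮ = finrank ℝ E - 2 := by
  have h := (span ℝ {a, c}).finrank_add_finrank_orthogonal
  have : finrank ℝ (span ℝ {a, c}) = 2 := by
    rw [← Matrix.range_cons_cons_empty, finrank_span_eq_card hac, Fintype.card_fin]
  omega

theorem exists_forall_inner_eq_zero_imp_eq_or_eq_neg (hE : finrank ℝ E = 3) {a c : E}
    (hac : LinearIndependent ℝ ![a, c]) (r : ℝ) :
    ∃ w : E, ∀ b, ⟪a, b⟫ = 0 → ⟪c, b⟫ = 0 → ‖b‖ = r → b = w ∨ b = -w := by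
  have : FiniteDimensional ℝ E := .of_finrank_pos (by omega)
  obtain ⟨w, hw⟩ := exists_forall_mem_norm_eq_imp_eq_or_eq_neg
    (K := (span ℝ {a, c})ᗮ) (by rw [finrank_orthogonal_span_pair hac, hE]) r
  refine ⟨w, fun b hab hcb hbr => hw b ?_ hbr⟩
  have hortho : ℝ ∙ b ⟂ span ℝ {a, c} := isOrtho_span.2 (by simp [real_inner_comm, hab, hcb])
  exact hortho (mem_span_singleton_self b)

theorem card_filter_unitPaths_endpoints_le_two [DecidableEq E] (hE : finrank ℝ E = 3)
    {P : Finset E} {r : ℝ} (hP : ∀ x ∈ P, ‖x‖ = r) (hr : 2 * r ^ 2 = 1) (a c : E) :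
    #{t ∈ unitPaths P | t.2.2 ≠ -t.1 ∧ (t.1, t.2.2) = (a, c)} ≤ 2 := by
  set F := {t ∈ unitPaths P | t.2.2 ≠ -t.1 ∧ (t.1, t.2.2) = (a, c)}
  have hF : ∀ t ∈ F, t.1 = a ∧ t.2.2 = c ∧ c ≠ -a ∧ a ∈ P ∧ t.2.1 ∈ P ∧ c ∈ P ∧
      a ≠ c ∧ dist a t.2.1 = 1 ∧ dist t.2.1 c = 1 := by
    rintro ⟨x, y, z⟩ ht
    simp only [F, unitPaths, mem_filter, mem_product, Prod.mk.injEq] at ht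
    obtain ⟨⟨⟨hx, hy, hz⟩, hxy, hxz, -, hdxy, hdyz⟩, hzx, rfl, rfl⟩ := ht
    exact ⟨rfl, rfl, hzx, hx, hy, hz, hxz, hdxy, hdyz⟩
  rcases F.eq_empty_or_nonempty with hempty | ⟨t₀, ht₀⟩
  · simp [hempty]
  obtain ⟨-, -, hca, ha, -, hc, hac, -, -⟩ := hF t₀ ht₀
  have hinner : ∀ x ∈ P, ∀ y ∈ P, dist x y = 1 → ⟪x, y⟫ = 0 := fun x hx y hy hxy =>
    inner_eq_zero_of_dist_sq_eq (hP x hx) (hP y hy) (by rw [hxy, one_pow, hr])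
  have hc0 : c ≠ 0 := by
    rintro rfl
    have := hP 0 hc
    simp only [norm_zero] at this
    nlinarith
  obtain ⟨w, hw⟩ := exists_forall_inner_eq_zero_imp_eq_or_eq_neg hE
    (linearIndependent_pair_of_norm_eq_s6 ((hP a ha).trans (hP c hc).symm) hc0 hac hca) r
  calc #F ≤ #({w, -w} : Finset E) := by
        refine card_le_card_of_injOn (fun t => t.2.1) (fun t ht => ?_) fun t ht s hs hts => ?_
        · obtain ⟨-, -, -, ha, hb, hc, -, hab, hbc⟩ := hF t ht
          simpa using hw t.2.1 (hinner a ha _ hb hab)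
            ((real_inner_comm _ c).trans (hinner _ hb c hc hbc)) (hP _ hb)
        · obtain ⟨ht1, ht3, -⟩ := hF t ht
          obtain ⟨hs1, hs3, -⟩ := hF s hs
          exact Prod.ext (ht1.trans hs1.symm) (Prod.ext hts (ht3.trans hs3.symm))
    _ ≤ 2 := card_le_two

theorem card_unitPaths_le (hE : finrank ℝ E = 3) {P : Finset E} {r : ℝ}
    (hP : ∀ x ∈ P, ‖x‖ = r) (hr : 2 * r ^ 2 = 1) : #(unitPaths P) ≤ 3 * #P ^ 2 := by
  classical
  have hgeneric : #{t ∈ unitPaths P | ¬t.2.2 = -t.1} ≤ 2 * #P ^ 2 := by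
    rw [sq, ← card_product]
    refine card_le_mul_card_image_of_maps_to (f := fun t => (t.1, t.2.2))
      (fun t ht => ?_) 2 fun ⟨a, c⟩ _ => ?_
    · simp_all [unitPaths]
    · rw [filter_filter]
      exact card_filter_unitPaths_endpoints_le_two hE hP hr a c
  have hantipodal := card_filter_unitPaths_antipodal_le P
  rw [← card_filter_add_card_filter_not (fun t => t.2.2 = -t.1)]
  omega

theorem three_paths_on_sphere_quadratic :
    ∃ C : ℝ, 0 < C ∧
      ∀ (n : ℕ) (P : Finset (EuclideanSpace ℝ (Fin 3))),
        (∀ x ∈ P, ‖x‖ = 1 / Real.sqrt 2) → P.card = n →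
        ({t : EuclideanSpace ℝ (Fin 3) × EuclideanSpace ℝ (Fin 3) ×
            EuclideanSpace ℝ (Fin 3) |
          t.1 ∈ P ∧ t.2.1 ∈ P ∧ t.2.2 ∈ P ∧
          t.1 ≠ t.2.1 ∧ t.1 ≠ t.2.2 ∧ t.2.1 ≠ t.2.2 ∧
          dist t.1 t.2.1 = 1 ∧ dist t.2.1 t.2.2 = 1}.ncard : ℝ) ≤ C * n ^ 2 := by
  refine ⟨3, by norm_num, fun n P hP hn => ?_⟩
  have hr : 2 * (1 / Real.sqrt 2) ^ 2 = 1 := by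
    rw [div_pow, Real.sq_sqrt zero_le_two]
    norm_num
  rw [← coe_unitPaths, Set.ncard_coe_finset, ← hn]
  exact_mod_cast card_unitPaths_le finrank_euclideanSpace_fin hP hr
end

section
/- On the sphere of radius 1/√2 in ℝ³, for every n there exists a set of n points determining at least c·n² unit-distance 4-cycles (4-tuples of distinct points with consecutive distances 1, cyclically), for some absolute constant c > 0. Hence C₄^S(n) = Θ(n²). -/
/-!
Put two antipodal poles `±p` on the sphere and `n - 2` further points on the equator orthogonal
to them. By Pythagoras every equator point lies at distance `√(1/2 + 1/2) = 1` from both poles,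
so every ordered pair `(x, z)` of distinct equator points closes the unit 4-cycle `x, p, z, -p`.
This gives `(n - 2)(n - 3) ≥ n² / 8` cycles.
-/

open Finset Real
open scoped RealInnerProductSpace

section UnitFourCycles

variable {α : Type*}

def unitFourCycles [Dist α] (P : Finset α) : Set (α × α × α × α) :=
  {t | t.1 ∈ P ∧ t.2.1 ∈ P ∧ t.2.2.1 ∈ P ∧ t.2.2.2 ∈ P ∧
    t.1 ≠ t.2.1 ∧ t.1 ≠ t.2.2.1 ∧ t.1 ≠ t.2.2.2 ∧
    t.2.1 ≠ t.2.2.1 ∧ t.2.1 ≠ t.2.2.2 ∧ t.2.2.1 ≠ t.2.2.2 ∧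
    dist t.1 t.2.1 = 1 ∧ dist t.2.1 t.2.2.1 = 1 ∧
    dist t.2.2.1 t.2.2.2 = 1 ∧ dist t.2.2.2 t.1 = 1}

lemma unitFourCycles_finite [Dist α] (P : Finset α) : (unitFourCycles P).Finite :=
  (P ×ˢ P ×ˢ P ×ˢ P).finite_toSet.subset fun _ ht => by
    simp only [coe_product, Set.mem_prod, mem_coe]
    exact ⟨ht.1, ht.2.1, ht.2.2.1, ht.2.2.2.1⟩

lemma card_mul_pred_le_ncard_unitFourCycles_insert_insert [PseudoMetricSpace α]
    [DecidableEq α] {A : Finset α} {p q : α} (hpq : p ≠ q)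
    (hdist : ∀ a ∈ A, dist a p = 1 ∧ dist a q = 1) :
    #A * (#A - 1) ≤ (unitFourCycles (insert p (insert q A))).ncard := by
  have hne : ∀ a ∈ A, a ≠ p ∧ a ≠ q := fun a ha =>
    ⟨fun h => by simpa [h] using (hdist a ha).1, fun h => by simpa [h] using (hdist a ha).2⟩
  let cycle : α × α → α × α × α × α := fun xz => (xz.1, p, xz.2, q)
  have hcycle : ↑(A.offDiag.image cycle) ⊆ unitFourCycles (insert p (insert q A)) := by
    simp only [coe_image, Set.image_subset_iff]
    rintro ⟨x, z⟩ hxz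
    obtain ⟨hx, hz, hxz⟩ := mem_offDiag.1 hxz
    have hAP : A ⊆ insert p (insert q A) := (subset_insert q A).trans (subset_insert p _)
    exact ⟨hAP hx, mem_insert_self p _, hAP hz, mem_insert_of_mem (mem_insert_self q A),
      (hne x hx).1, hxz, (hne x hx).2, (hne z hz).1.symm, hpq, (hne z hz).2, (hdist x hx).1,
      dist_comm p z ▸ (hdist z hz).1, (hdist z hz).2, dist_comm q x ▸ (hdist x hx).2⟩
  calc #A * (#A - 1) = #(A.offDiag.image cycle) := by
        rw [card_image_of_injective _ fun _ _ h => by simpa [cycle, Prod.ext_iff] using h,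
          offDiag_card, Nat.mul_sub_one]
    _ ≤ _ := by
        rw [← Set.ncard_coe_finset]
        exact Set.ncard_le_ncard hcycle (unitFourCycles_finite _)

end UnitFourCycles

lemma dist_eq_one_of_inner_eq_zero {E : Type*} [NormedAddCommGroup E] [InnerProductSpace ℝ E]
    {x y : E} (hx : ‖x‖ = 1 / √2) (hy : ‖y‖ = 1 / √2) (hxy : ⟪x, y⟫ = 0) :
    dist x y = 1 := by
  rw [dist_eq_norm, ← pow_eq_one_iff_of_nonneg (norm_nonneg _) two_ne_zero,
    norm_sub_sq_real, hxy, hx, hy, div_pow, sq_sqrt zero_le_two]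
  norm_num

local notation "ℝ³" => EuclideanSpace ℝ (Fin 3)

def equator (r : ℝ) : Set ℝ³ := {x | ‖x‖ = r ∧ x 2 = 0}

lemma equator_infinite {r : ℝ} (hr : 0 < r) : (equator r).Infinite := by
  let f : ℝ → ℝ³ := fun θ => !₂[r * cos θ, r * sin θ, 0]
  have hf : Set.InjOn f (Set.Icc 0 π) := fun θ hθ φ hφ h =>
    injOn_cos hθ hφ (mul_left_cancel₀ hr.ne' (congrArg (· 0) h))
  refine ((Set.Icc_infinite pi_pos).image hf).mono ?_
  rintro _ ⟨θ, -, rfl⟩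
  refine ⟨?_, rfl⟩
  rw [EuclideanSpace.norm_eq, ← sqrt_sq hr.le]
  congr 1
  simp [f, Fin.sum_univ_three, mul_pow, ← mul_add, cos_sq_add_sin_sq]

lemma dist_equator_single_two {x : ℝ³} (hx : x ∈ equator (1 / √2)) {c : ℝ}
    (hc : |c| = 1 / √2) : dist x (EuclideanSpace.single 2 c) = 1 :=
  dist_eq_one_of_inner_eq_zero hx.1 (by simpa using hc)
    (by simp [EuclideanSpace.inner_single_right, hx.2])

lemma inv_eight_mul_sq_le {n : ℕ} (hn : 4 ≤ n) :
    1 / 8 * (n : ℝ) ^ 2 ≤ ((n - 2) * (n - 2 - 1) : ℕ) := by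
  obtain ⟨m, rfl⟩ := Nat.exists_eq_add_of_le' hn
  rw [show m + 4 - 2 - 1 = m + 1 by omega, show m + 4 - 2 = m + 2 by omega]
  push_cast
  nlinarith

theorem four_cycles_on_sphere_lower_bound :
    ∃ c : ℝ, 0 < c ∧ ∃ N : ℕ, ∀ n ≥ N,
      ∃ P : Finset (EuclideanSpace ℝ (Fin 3)),
        (∀ x ∈ P, ‖x‖ = 1 / Real.sqrt 2) ∧ P.card = n ∧
        c * (n : ℝ) ^ 2 ≤
          ({t : EuclideanSpace ℝ (Fin 3) × EuclideanSpace ℝ (Fin 3) ×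
              EuclideanSpace ℝ (Fin 3) × EuclideanSpace ℝ (Fin 3) |
            t.1 ∈ P ∧ t.2.1 ∈ P ∧ t.2.2.1 ∈ P ∧ t.2.2.2 ∈ P ∧
            t.1 ≠ t.2.1 ∧ t.1 ≠ t.2.2.1 ∧ t.1 ≠ t.2.2.2 ∧
            t.2.1 ≠ t.2.2.1 ∧ t.2.1 ≠ t.2.2.2 ∧ t.2.2.1 ≠ t.2.2.2 ∧
            dist t.1 t.2.1 = 1 ∧ dist t.2.1 t.2.2.1 = 1 ∧
            dist t.2.2.1 t.2.2.2 = 1 ∧ dist t.2.2.2 t.1 = 1}.ncard : ℝ) := by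
  refine ⟨1 / 8, by norm_num, 4, fun n hn => ?_⟩
  obtain ⟨A, hAeq, hA⟩ :=
    (equator_infinite (by positivity : (0 : ℝ) < 1 / √2)).exists_subset_card_eq (n - 2)
  set p : ℝ³ := EuclideanSpace.single 2 (1 / √2)
  set q : ℝ³ := EuclideanSpace.single 2 (-(1 / √2))
  have hdist : ∀ a ∈ A, dist a p = 1 ∧ dist a q = 1 := fun a ha =>
    ⟨dist_equator_single_two (hAeq ha) (abs_of_pos (by positivity)),
      dist_equator_single_two (hAeq ha) (by rw [abs_neg, abs_of_pos (by positivity)])⟩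
  have hpq : p ≠ q := fun h =>
    self_ne_neg.mpr (by positivity : (1 / √2 : ℝ) ≠ 0) (by simpa [p, q] using congrArg (· 2) h)
  have hpA : p ∉ A := fun h => by simpa using (hdist p h).1
  have hqA : q ∉ A := fun h => by simpa using (hdist q h).2
  refine ⟨insert p (insert q A), ?_, ?_, ?_⟩
  · simp only [mem_insert, forall_eq_or_imp]
    exact ⟨by simp [p], by simp [q], fun a ha => (hAeq ha).1⟩
  · rw [card_insert_of_notMem (by simp [hpq, hpA]), card_insert_of_notMem hqA, hA]
    omega
  calc 1 / 8 * (n : ℝ) ^ 2 ≤ ((n - 2) * (n - 2 - 1) : ℕ) := inv_eight_mul_sq_le hn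
    _ ≤ (unitFourCycles (insert p (insert q A))).ncard := by
      rw [← hA]
      exact_mod_cast card_mul_pred_le_ncard_unitFourCycles_insert_insert hpq hdist
end

section
/- Let G be a 3-regular graph on k vertices and let P₁, …, P_k be finite subsets of ℝ³ such that for every edge (i, j) of G, every point of P_i is at distance exactly 1 from every point of P_j. Then |P_i| ≤ 2 for at least k/2 of the indices i. Consequently, the number of k-tuples (p₁, …, p_k) with p_i ∈ P_i is at most 2^{k/2} · n^{k/2} when each |P_i| ≤ n. -/
/-!
If two finite sets `A`, `B` in `ℝ³` have all cross distances equal to `1`, then any three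
points of `A` lie on a sphere around a point of `B`, so they are not collinear and span a plane,
and likewise for `B`.
The two planes are orthogonal (each pair of points of `B` lies on the perpendicular bisector of
each pair of points of `A`), which is impossible in dimension three; hence `#A ≤ 2` or `#B ≤ 2`.
So the vertices `i` with `#Pᵢ ≥ 3` form an independent set of the cubic graph, which has at most
half of the vertices by double counting edges. As a cubic graph has an even number `k` of
vertices, at least `k / 2` factors of the product are then at most `2`.
-/

open Finset Module EuclideanGeometry

theorem Submodule.IsOrtho.finrank_add_finrank_le {E : Type*} [NormedAddCommGroup E]
    [InnerProductSpace ℝ E] [FiniteDimensional ℝ E] {U W : Submodule ℝ E} (h : U ⟂ W) :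
    finrank ℝ U + finrank ℝ W ≤ finrank ℝ E := by
  have hinf : U ⊓ W = ⊥ := h.disjoint.eq_bot
  have := Submodule.finrank_sup_add_finrank_inf_eq U W
  rw [hinf, finrank_bot] at this
  exact this ▸ (U ⊔ W).finrank_le

section Geometry

variable {V P : Type*} [NormedAddCommGroup V] [InnerProductSpace ℝ V] [MetricSpace P]
  [NormedAddTorsor V P]

theorem isOrtho_vectorSpan_of_dist_eq {s t : Set P} {r : ℝ}
    (h : ∀ a ∈ s, ∀ b ∈ t, dist a b = r) : vectorSpan ℝ s ⟂ vectorSpan ℝ t := by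
  rw [vectorSpan_def, vectorSpan_def, Submodule.isOrtho_span]
  rintro _ ⟨a₁, ha₁, a₂, ha₂, rfl⟩ _ ⟨b₁, hb₁, b₂, hb₂, rfl⟩
  refine inner_vsub_vsub_of_dist_eq_of_dist_eq ?_ ?_ <;>
    rw [dist_comm, h _ ‹_› _ hb₂, dist_comm, h _ ‹_› _ hb₁]

theorem two_le_finrank_vectorSpan_of_dist_eq {s : Finset P} {c : P} {r : ℝ} (hs : 2 < #s)
    (h : ∀ a ∈ s, dist a c = r) : 2 ≤ finrank ℝ (vectorSpan ℝ (s : Set P)) := by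
  have := finiteDimensional_vectorSpan_of_finite ℝ s.finite_toSet
  obtain ⟨a₁, ha₁, a₂, ha₂, a₃, ha₃, h₁₂, h₁₃, h₂₃⟩ := two_lt_card.1 hs
  have hcosph : Cospherical ({a₁, a₂, a₃} : Set P) :=
    ⟨c, r, by simp only [Set.mem_insert_iff, Set.mem_singleton_iff]; rintro _ (rfl | rfl | rfl) <;>
      apply h <;> assumption⟩
  have hrange : Set.range ![a₁, a₂, a₃] ⊆ s := by
    rw [Matrix.range_cons, Matrix.range_cons, Matrix.range_cons, Matrix.range_empty]
    simp [Set.insert_subset_iff, ha₁, ha₂, ha₃]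
  calc 2 = finrank ℝ (vectorSpan ℝ (Set.range ![a₁, a₂, a₃])) :=
        ((hcosph.affineIndependent_of_ne h₁₂ h₁₃ h₂₃).finrank_vectorSpan (by simp)).symm
    _ ≤ _ := Submodule.finrank_mono (vectorSpan_mono ℝ hrange)

theorem card_le_two_or_card_le_two_of_dist_eq [FiniteDimensional ℝ V] (hV : finrank ℝ V ≤ 3)
    {s t : Finset P} {r : ℝ} (h : ∀ a ∈ s, ∀ b ∈ t, dist a b = r) : #s ≤ 2 ∨ #t ≤ 2 := by
  by_contra! hst
  obtain ⟨b, hb⟩ := card_pos.1 (by omega : 0 < #t)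
  obtain ⟨a, ha⟩ := card_pos.1 (by omega : 0 < #s)
  have hs := two_le_finrank_vectorSpan_of_dist_eq hst.1 (fun x hx => h x hx b hb)
  have ht := two_le_finrank_vectorSpan_of_dist_eq hst.2
    (fun y hy => (dist_comm y a).trans (h a ha y hy))
  have := (isOrtho_vectorSpan_of_dist_eq (s := (s : Set P)) (t := t) h).finrank_add_finrank_le
  omega

end Geometry

namespace SimpleGraph.IsRegularOfDegree

variable {V : Type*} [Fintype V] {G : SimpleGraph V} [DecidableRel G.Adj] {d : ℕ}

theorem card_le_card_compl_of_isIndepSet [DecidableEq V] (hG : G.IsRegularOfDegree d)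
    (hd : 0 < d) {s : Finset V} (hs : G.IsIndepSet (s : Set V)) : #s ≤ #sᶜ := by
  -- the `d * #s` edges at `s` all end in `sᶜ`, which meets only `d * #sᶜ` edges
  have hcount : #s * d ≤ #sᶜ * d := by
    refine card_mul_le_card_mul G.Adj (fun a ha => ?_) (fun b _ => ?_)
    · rw [← hG.degree_eq a, ← card_neighborFinset_eq_degree]
      refine card_le_card fun b hb => ?_
      have hab : G.Adj a b := (mem_neighborFinset _ _ _).1 hb
      exact mem_filter.2 ⟨mem_compl.2 fun hbs => hs ha hbs hab.ne hab, hab⟩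
    · rw [← hG.degree_eq b, ← card_neighborFinset_eq_degree]
      refine card_le_card fun a ha => ?_
      exact (mem_neighborFinset _ _ _).2 (G.adj_symm (mem_filter.1 ha).2)
  exact Nat.le_of_mul_le_mul_right hcount hd

theorem even_card_of_odd (hG : G.IsRegularOfDegree d) (hd : Odd d) : Even (Fintype.card V) := by
  have := G.even_card_odd_degree_vertices
  simp_rw [hG.degree_eq, hd, filter_true] at this
  exact this

end SimpleGraph.IsRegularOfDegree

theorem Finset.prod_le_pow_mul_pow_of_card_le {ι : Type*} [Fintype ι] [DecidableEq ι]
    (f : ι → ℕ) (s : Finset ι) {m l a b : ℕ} (hcard : Fintype.card ι = m + l) (hs : #s ≤ m)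
    (hf : ∀ i, f i ≤ b) (hfs : ∀ i ∉ s, f i ≤ a) : ∏ i, f i ≤ b ^ m * a ^ l := by
  obtain ⟨u, hsu, -, hu⟩ := exists_subsuperset_card_eq (subset_univ s) hs
    (by rw [card_univ]; omega)
  rw [← prod_mul_prod_compl u f]
  gcongr
  · exact hu ▸ prod_le_pow_card u f b fun i _ => hf i
  · have hcompl : #uᶜ = l := by rw [card_compl]; omega
    exact hcompl ▸ prod_le_pow_card uᶜ f a fun i hi => hfs i fun his => mem_compl.1 hi (hsu his)

theorem cubic_graph_full_type_bound
    (k n : ℕ) (G : SimpleGraph (Fin k)) [DecidableRel G.Adj]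
    (hreg : G.IsRegularOfDegree 3)
    (P : Fin k → Finset (EuclideanSpace ℝ (Fin 3)))
    (hdist : ∀ i j : Fin k, G.Adj i j →
      ∀ p ∈ P i, ∀ q ∈ P j, dist p q = 1)
    (hsize : ∀ i, (P i).card ≤ n) :
    k / 2 ≤ (Finset.univ.filter fun i : Fin k => (P i).card ≤ 2).card ∧
    (∏ i : Fin k, (P i).card) ≤ 2 ^ (k / 2) * n ^ (k / 2) := by
  set small := univ.filter fun i : Fin k => (P i).card ≤ 2
  have hindep : G.IsIndepSet (smallᶜ : Finset (Fin k)) := by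
    intro i hi j hj _ hij
    simp only [small, coe_compl, coe_filter, mem_univ, true_and, Set.mem_compl_iff,
      Set.mem_ofPred_eq] at hi hj
    rcases card_le_two_or_card_le_two_of_dist_eq (by simp) (hdist i j hij) with h | h
    exacts [hi h, hj h]
  have hhalf := hreg.card_le_card_compl_of_isIndepSet (by norm_num) hindep
  rw [compl_compl] at hhalf
  have htotal := card_compl_add_card small
  obtain ⟨m, hm⟩ := hreg.even_card_of_odd (by decide)
  rw [Fintype.card_fin] at hm htotal
  refine ⟨by omega, ?_⟩
  rw [show k / 2 = m by omega, mul_comm]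
  refine prod_le_pow_mul_pow_of_card_le _ smallᶜ (by simpa using hm) (by omega) hsize
    fun i hi => ?_
  simpa [small] using hi
end

section
/- Let G be a 3-regular bipartite graph on k vertices with parts of size k/2 each, and let r, d > 0 satisfy r² + d² between appropriate values so that the construction works: place k/2 distinct points on a line ℓ and n − k/2 points on a circle C of radius r centered at a point of ℓ in a plane orthogonal to ℓ, such that each line point is at the same distance from every circle point. Then the number of embeddings of G (with prescribed edge lengths equal to these distances) into this n-point set is at least c · n^{k/2} for a constant c > 0 depending only on k. -/
/-!
Put the points `(m + 1) • e₁` on a line and the points of the unit circle of the orthogonal plane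
through the origin on a circle: by Pythagoras every line point is at distance `√((m + 1)² + 1)` from
every circle point. Fix a placement of the part `A` on the first `k / 2` line points and send the
other part injectively into `n - k / 2` circle points. Since every edge joins `A` to its complement,
all these maps realize the same edge lengths, and there are
`(n - k/2).descFactorial (k - k/2) ≥ (n - k + 1) ^ (k / 2) ≥ (n / (k + 1)) ^ (k / 2)` of them.
-/

open Finset Function

local notation "ℝ³" => EuclideanSpace ℝ (Fin 3)

noncomputable section

def axisVector : ℝ³ := !₂[1, 0, 0]

def linePoint (m : ℕ) : ℝ³ := ((m : ℝ) + 1) • axisVector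

/-- The rational parametrization of the unit circle in the plane orthogonal to `axisVector`. -/
def circlePoint (j : ℕ) : ℝ³ :=
  !₂[0, (1 - (j : ℝ) ^ 2) / (1 + (j : ℝ) ^ 2), 2 * j / (1 + (j : ℝ) ^ 2)]

lemma norm_axisVector : ‖axisVector‖ = 1 := by
  simp [axisVector, EuclideanSpace.norm_eq, Fin.sum_univ_three]

lemma inner_circlePoint_axisVector (j : ℕ) : inner ℝ (circlePoint j) axisVector = 0 := by
  simp [circlePoint, axisVector, PiLp.inner_apply, Fin.sum_univ_three]

lemma inner_linePoint_axisVector (m : ℕ) : inner ℝ (linePoint m) axisVector = m + 1 := by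
  rw [linePoint, real_inner_smul_left, real_inner_self_eq_norm_sq, norm_axisVector]
  ring

lemma norm_circlePoint (j : ℕ) : ‖circlePoint j‖ = 1 := by
  have h : (1 : ℝ) + (j : ℝ) ^ 2 ≠ 0 := by positivity
  rw [EuclideanSpace.norm_eq, Real.sqrt_eq_one, Fin.sum_univ_three]
  simp only [circlePoint, Real.norm_eq_abs, sq_abs, Matrix.cons_val_zero, Matrix.cons_val_one,
    Matrix.cons_val, ne_eq, OfNat.ofNat_ne_zero, not_false_eq_true, zero_pow, zero_add]
  field_simp
  ring

lemma dist_linePoint_circlePoint (m j : ℕ) :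
    dist (linePoint m) (circlePoint j) = √(((m : ℝ) + 1) ^ 2 + 1) := by
  have h : inner ℝ (linePoint m) (circlePoint j) = 0 := by
    rw [linePoint, real_inner_smul_left, real_inner_comm, inner_circlePoint_axisVector, mul_zero]
  rw [dist_eq_norm, ← Real.sqrt_sq (norm_nonneg _), sq, norm_sub_sq_eq_norm_sq_add_norm_sq_real h,
    norm_circlePoint, linePoint, norm_smul, norm_axisVector]
  congr 1
  simp only [Real.norm_eq_abs, mul_one]
  rw [← sq, sq_abs]

lemma linePoint_injective : Injective linePoint := by
  intro m m' h
  have := congrArg (inner ℝ · axisVector) h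
  simpa only [inner_linePoint_axisVector, add_left_inj, Nat.cast_inj] using this

lemma circlePoint_injective : Injective circlePoint := by
  intro j j' h
  have h1 := congrArg (· 1) h
  have hj : (1 : ℝ) + (j : ℝ) ^ 2 ≠ 0 := by positivity
  have hj' : (1 : ℝ) + (j' : ℝ) ^ 2 ≠ 0 := by positivity
  simp only [circlePoint, Matrix.cons_val_one, Matrix.cons_val_zero] at h1
  rw [div_eq_div_iff hj hj'] at h1
  have : (j : ℝ) ^ 2 = (j' : ℝ) ^ 2 := by linarith
  exact Nat.pow_left_injective two_ne_zero (by exact_mod_cast this)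

lemma linePoint_ne_circlePoint (m j : ℕ) : linePoint m ≠ circlePoint j := by
  intro h
  have := congrArg (inner ℝ · axisVector) h
  simp only [inner_linePoint_axisVector, inner_circlePoint_axisVector] at this
  exact absurd this (by positivity)

def linePoints (a : ℕ) : Finset ℝ³ := (range a).image linePoint

def circlePoints (b : ℕ) : Finset ℝ³ := (range b).image circlePoint

lemma disjoint_linePoints_circlePoints (a b : ℕ) : Disjoint (linePoints a) (circlePoints b) := by
  simp only [linePoints, circlePoints, disjoint_left, mem_image, not_exists, not_and]
  rintro _ ⟨m, -, rfl⟩ j - h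
  exact linePoint_ne_circlePoint m j h.symm

lemma card_linePoints (a : ℕ) : (linePoints a).card = a := by
  rw [linePoints, card_image_of_injective _ linePoint_injective, card_range]

lemma card_circlePoints (b : ℕ) : (circlePoints b).card = b := by
  rw [circlePoints, card_image_of_injective _ circlePoint_injective, card_range]

lemma line_circle_configuration (a b : ℕ) :
    ∃ (p v : ℝ³), v ≠ 0 ∧
      ∃ L C : Finset ℝ³,
        Disjoint L C ∧ (∀ x, x ∈ linePoints a ∪ circlePoints b ↔ x ∈ L ∨ x ∈ C) ∧ L.card = a ∧
        (∀ x ∈ L, ∃ t : ℝ, x = p + t • v) ∧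
        (∃ (c₀ : ℝ³) (r : ℝ), 0 < r ∧ (∃ t : ℝ, c₀ = p + t • v) ∧
          ∀ x ∈ C, inner ℝ (x - c₀) v = (0 : ℝ) ∧ dist x c₀ = r) ∧
        (∀ x ∈ L, ∃ d : ℝ, ∀ y ∈ C, dist x y = d) := by
  refine ⟨0, axisVector, norm_ne_zero_iff.1 (norm_axisVector ▸ one_ne_zero), linePoints a,
    circlePoints b, disjoint_linePoints_circlePoints a b, fun _ ↦ mem_union, card_linePoints a,
    ?_, ⟨0, 1, one_pos, ⟨0, by simp⟩, ?_⟩, ?_⟩ <;>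
    simp only [linePoints, circlePoints, forall_mem_image]
  · exact fun m _ ↦ ⟨m + 1, (zero_add _).symm⟩
  · exact fun j _ ↦ ⟨by rw [sub_zero, inner_circlePoint_axisVector],
      by rw [dist_zero_right, norm_circlePoint]⟩
  · exact fun m _ ↦ ⟨_, fun j _ ↦ dist_linePoint_circlePoint m j⟩

section Placement

variable {V : Type*} [DecidableEq V] (A : Finset V) {N : ℕ}

def placement (σ : {v // v ∉ A} ↪ Fin N) (v : V) : ℝ³ :=
  if h : v ∈ A then linePoint (A.equivFin ⟨v, h⟩) else circlePoint (σ ⟨v, h⟩)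

lemma placement_mem (σ : {v // v ∉ A} ↪ Fin N) (v : V) :
    placement A σ v ∈ linePoints A.card ∪ circlePoints N := by
  unfold placement
  split_ifs
  · exact mem_union_left _ (mem_image_of_mem _ (mem_range.2 (Fin.is_lt _)))
  · exact mem_union_right _ (mem_image_of_mem _ (mem_range.2 (Fin.is_lt _)))

lemma placement_injective (σ : {v // v ∉ A} ↪ Fin N) : Injective (placement A σ) := by
  intro v w h
  unfold placement at h
  split_ifs at h with hv hw hw
  · simpa using A.equivFin.injective (Fin.val_injective (linePoint_injective h))
  · exact absurd h (linePoint_ne_circlePoint _ _)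
  · exact absurd h.symm (linePoint_ne_circlePoint _ _)
  · simpa using σ.injective (Fin.val_injective (circlePoint_injective h))

lemma injective_placement : Injective (placement A (N := N)) := by
  intro σ τ h
  ext ⟨v, hv⟩
  have := congrFun h v
  simp only [placement, hv, dite_false] at this
  exact circlePoint_injective this

lemma dist_placement_eq (σ τ : {v // v ∉ A} ↪ Fin N) {v w : V} (h : v ∈ A ↔ w ∉ A) :
    dist (placement A σ v) (placement A σ w) = dist (placement A τ v) (placement A τ w) := by
  by_cases hv : v ∈ A
  · have hw := h.1 hv
    simp only [placement, hv, hw, dite_true, dite_false, dist_linePoint_circlePoint]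
  · have hw : w ∈ A := not_not.1 (mt h.2 hv)
    simp only [placement, hv, hw, dite_true, dite_false, dist_comm (circlePoint _),
      dist_linePoint_circlePoint]

lemma descFactorial_le_ncard_of_bipartite [Fintype V] (G : SimpleGraph V)
    (hbip : ∀ v w, G.Adj v w → (v ∈ A ↔ w ∉ A)) (σ₀ : {v // v ∉ A} ↪ Fin N) :
    N.descFactorial (Fintype.card {v // v ∉ A}) ≤
      {f : V → ℝ³ | Injective f ∧ (∀ v, f v ∈ linePoints A.card ∪ circlePoints N) ∧
        ∀ v w, G.Adj v w →
          dist (f v) (f w) = dist (placement A σ₀ v) (placement A σ₀ w)}.ncard := by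
  have hcard : (Set.univ : Set ({v // v ∉ A} ↪ Fin N)).ncard =
      N.descFactorial (Fintype.card {v // v ∉ A}) := by
    rw [Set.ncard_univ, Nat.card_eq_fintype_card, Fintype.card_embedding_eq, Fintype.card_fin]
  rw [← hcard]
  refine Set.ncard_le_ncard_of_injOn (placement A)
    (fun σ _ ↦ ⟨placement_injective A σ, placement_mem A σ,
      fun v w hvw ↦ dist_placement_eq A σ σ₀ (hbip v w hvw)⟩)
    (injective_placement A).injOn ?_
  exact (Set.Finite.pi' fun _ ↦ (linePoints A.card ∪ circlePoints N).finite_toSet).subset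
    fun f hf ↦ hf.2.1

end Placement

end

lemma inv_succ_pow_mul_pow_le_descFactorial {k n : ℕ} (h : k ≤ n) :
    ((k : ℝ) + 1)⁻¹ ^ (k / 2) * (n : ℝ) ^ (k / 2) ≤ (n - k / 2).descFactorial (k - k / 2) := by
  have hbase : (n : ℝ) / (k + 1) ≤ (n - k + 1 : ℕ) := by
    have hkn : (k : ℝ) ≤ n := by exact_mod_cast h
    rw [div_le_iff₀ (by positivity), Nat.cast_add, Nat.cast_sub h]
    push_cast
    nlinarith
  calc ((k : ℝ) + 1)⁻¹ ^ (k / 2) * (n : ℝ) ^ (k / 2)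
      = ((n : ℝ) / (k + 1)) ^ (k / 2) := by rw [← mul_pow, inv_mul_eq_div]
    _ ≤ ((n - k + 1 : ℕ) : ℝ) ^ (k / 2) := pow_le_pow_left₀ (by positivity) hbase _
    _ ≤ ((n - k + 1 : ℕ) : ℝ) ^ (k - k / 2) :=
        pow_le_pow_right₀ (by norm_cast; omega) (by omega)
    _ ≤ (n - k / 2).descFactorial (k - k / 2) := by
        have := Nat.pow_sub_le_descFactorial (n - k / 2) (k - k / 2)
        rw [show n - k / 2 + 1 - (k - k / 2) = n - k + 1 by omega] at this
        exact_mod_cast this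

theorem bipartite_cubic_prescribed_lengths_lower_bound_general
    (k : ℕ) (G : SimpleGraph (Fin k))
    (A : Finset (Fin k)) (hA : A.card = k / 2)
    (hbip : ∀ i j : Fin k, G.Adj i j → (i ∈ A ↔ j ∉ A)) :
    ∃ c : ℝ, 0 < c ∧ ∀ n : ℕ, k ≤ n →
      ∃ (P : Finset (EuclideanSpace ℝ (Fin 3)))
        (w : Fin k → Fin k → ℝ),
        P.card = n ∧
        -- the configuration: k/2 points on a line ℓ, the rest on a circle
        -- centered at a point of ℓ in a plane orthogonal to ℓ, with each
        -- line point equidistant from all circle points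
        (∃ (p v : EuclideanSpace ℝ (Fin 3)), v ≠ 0 ∧
          ∃ L C : Finset (EuclideanSpace ℝ (Fin 3)),
            Disjoint L C ∧ (∀ x, x ∈ P ↔ x ∈ L ∨ x ∈ C) ∧ L.card = k / 2 ∧
            (∀ x ∈ L, ∃ t : ℝ, x = p + t • v) ∧
            (∃ (c₀ : EuclideanSpace ℝ (Fin 3)) (r : ℝ), 0 < r ∧
              (∃ t : ℝ, c₀ = p + t • v) ∧
              ∀ x ∈ C, inner ℝ (x - c₀) v = (0 : ℝ) ∧ dist x c₀ = r) ∧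
            (∀ x ∈ L, ∃ d : ℝ, ∀ y ∈ C, dist x y = d)) ∧
        c * (n : ℝ) ^ (k / 2) ≤
          ({f : Fin k → EuclideanSpace ℝ (Fin 3) |
            Function.Injective f ∧ (∀ i, f i ∈ P) ∧
            ∀ i j : Fin k, G.Adj i j → dist (f i) (f j) = w i j}.ncard : ℝ) := by
  refine ⟨((k : ℝ) + 1)⁻¹ ^ (k / 2), by positivity, fun n hn ↦ ?_⟩
  have hcompl : Fintype.card {i // i ∉ A} = k - k / 2 := by
    rw [Fintype.card_subtype_compl, Fintype.card_fin, Fintype.card_coe, hA]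
  obtain ⟨σ₀⟩ : Nonempty ({i // i ∉ A} ↪ Fin (n - k / 2)) :=
    Function.Embedding.nonempty_of_card_le (by rw [hcompl, Fintype.card_fin]; omega)
  refine ⟨linePoints A.card ∪ circlePoints (n - k / 2),
    fun i j ↦ dist (placement A σ₀ i) (placement A σ₀ j), ?_,
    hA ▸ line_circle_configuration _ _, ?_⟩
  · rw [card_union_of_disjoint (disjoint_linePoints_circlePoints _ _), card_linePoints,
      card_circlePoints, hA]
    omega
  · calc ((k : ℝ) + 1)⁻¹ ^ (k / 2) * (n : ℝ) ^ (k / 2)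
        ≤ (n - k / 2).descFactorial (k - k / 2) := inv_succ_pow_mul_pow_le_descFactorial hn
      _ ≤ _ := by
        rw [← hcompl]
        exact_mod_cast descFactorial_le_ncard_of_bipartite A G hbip σ₀

theorem bipartite_cubic_prescribed_lengths_lower_bound
    (k : ℕ) (G : SimpleGraph (Fin k)) [DecidableRel G.Adj] (hreg : G.IsRegularOfDegree 3)
    (A : Finset (Fin k)) (hA : A.card = k / 2)
    (hbip : ∀ i j : Fin k, G.Adj i j → (i ∈ A ↔ j ∉ A)) :
    ∃ c : ℝ, 0 < c ∧ ∀ n : ℕ, k ≤ n →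
      ∃ (P : Finset (EuclideanSpace ℝ (Fin 3)))
        (w : Fin k → Fin k → ℝ),
        P.card = n ∧
        -- the configuration: k/2 points on a line ℓ, the rest on a circle
        -- centered at a point of ℓ in a plane orthogonal to ℓ, with each
        -- line point equidistant from all circle points
        (∃ (p v : EuclideanSpace ℝ (Fin 3)), v ≠ 0 ∧
          ∃ L C : Finset (EuclideanSpace ℝ (Fin 3)),
            Disjoint L C ∧ (∀ x, x ∈ P ↔ x ∈ L ∨ x ∈ C) ∧ L.card = k / 2 ∧
            (∀ x ∈ L, ∃ t : ℝ, x = p + t • v) ∧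
            (∃ (c₀ : EuclideanSpace ℝ (Fin 3)) (r : ℝ), 0 < r ∧
              (∃ t : ℝ, c₀ = p + t • v) ∧
              ∀ x ∈ C, inner ℝ (x - c₀) v = (0 : ℝ) ∧ dist x c₀ = r) ∧
            (∀ x ∈ L, ∃ d : ℝ, ∀ y ∈ C, dist x y = d)) ∧
        c * (n : ℝ) ^ (k / 2) ≤
          ({f : Fin k → EuclideanSpace ℝ (Fin 3) |
            Function.Injective f ∧ (∀ i, f i ∈ P) ∧
            ∀ i j : Fin k, G.Adj i j → dist (f i) (f j) = w i j}.ncard : ℝ) :=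
  bipartite_cubic_prescribed_lengths_lower_bound_general k G A hA hbip
end
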